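/- Let A be a bialgebra over a commutative ring k and let f : A → k be a character. Equip the k-module A with the left A-action given by multiplication, a ▷ c := ac, and the right A-action c ◁ b := c·σ_f(b). Then: (1) these actions make A an A-bimodule; (2) the k-linear map δ : A → A defined by δ(a) := σ_f(a) − a satisfies the Leibniz rule δ(ab) = δ(a) ◁ b + a ▷ δ(b) for all a, b ∈ A; and (3) with X := 1 in this bimodule, δ(a) = X ◁ a − a ▷ X for all a ∈ A, so δ is inner with generating element X. -/

import Mathlib

/- The one-dimensional first-order differential calculus (Γ₀, δ) attached to a
character f of a bialgebra A: Γ₀ = A with a ▷ c = ac, c ◁ b = c·σ_f(b), and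
inner differential δ(a) = σ_f(a) − a = X ◁ a − a ▷ X for X = 1. -/

open TensorProduct

/-- The convolution operator `σ_f = (id ⊗ f) ∘ Δ : A → A` associated with a
linear functional `f : A → k`. -/
noncomputable def sigmaConv (k A : Type*) [CommRing k] [Ring A] [Bialgebra k A]
    (f : A →ₗ[k] k) : A →ₗ[k] A :=
  (TensorProduct.rid k A).toLinearMap ∘ₗ
    (TensorProduct.map LinearMap.id f) ∘ₗ Coalgebra.comul


lemma sigmaConv_eq (k A : Type*) [CommRing k] [Ring A] [Bialgebra k A] (f : A →ₐ[k] k) :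
    sigmaConv k A f.toLinearMap =
      (((Algebra.TensorProduct.rid k k A).toAlgHom.comp
        ((Algebra.TensorProduct.map (AlgHom.id k A) f).comp
          (Bialgebra.comulAlgHom k A)))).toLinearMap := by
  ext a
  simp only [sigmaConv, LinearMap.coe_comp, Function.comp_apply, AlgHom.toLinearMap_apply,
    AlgHom.coe_comp, AlgEquiv.toAlgHom_eq_coe, AlgHom.coe_coe, Bialgebra.comulAlgHom_apply]
  induction Coalgebra.comul (R := k) a using TensorProduct.induction_on with
  | zero => simp
  | tmul b c => simp [Algebra.TensorProduct.rid_tmul]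
  | add x y hx hy => simp only [map_add, hx, hy]

lemma sigmaConv_mul (k A : Type*) [CommRing k] [Ring A] [Bialgebra k A] (f : A →ₐ[k] k)
    (a b : A) : sigmaConv k A f.toLinearMap (a * b) =
      sigmaConv k A f.toLinearMap a * sigmaConv k A f.toLinearMap b := by
  simp only [sigmaConv_eq, AlgHom.toLinearMap_apply, map_mul]

lemma sigmaConv_one (k A : Type*) [CommRing k] [Ring A] [Bialgebra k A] (f : A →ₐ[k] k) :
    sigmaConv k A f.toLinearMap 1 = 1 := by
  simp only [sigmaConv_eq, AlgHom.toLinearMap_apply, map_one]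

/-- Let `f` be a character of a bialgebra `A`.  Equip the
`k`-module `A` with the left action `a ▷ c := ac` and the right action
`c ◁ b := c · σ_f(b)`.  Then (1) these actions make `A` an `A`-bimodule
(associativity, unitality, additivity and commutation of the two actions);
(2) `δ(a) := σ_f(a) − a` satisfies the Leibniz rule
`δ(ab) = δ(a) ◁ b + a ▷ δ(b)`; and (3) with `X := 1`,
`δ(a) = X ◁ a − a ▷ X`, so `δ` is inner with generating element `X`. -/
theorem one_dimensional_calculus (k A : Type*) [CommRing k] [Ring A]
    [Bialgebra k A] (f : A →ₐ[k] k) :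
    (∀ (a b c : A),
      (c * sigmaConv k A f.toLinearMap a) * sigmaConv k A f.toLinearMap b =
        c * sigmaConv k A f.toLinearMap (a * b)) ∧
    (∀ c : A, c * sigmaConv k A f.toLinearMap 1 = c) ∧
    (∀ (b c c' : A), (c + c') * sigmaConv k A f.toLinearMap b =
      c * sigmaConv k A f.toLinearMap b + c' * sigmaConv k A f.toLinearMap b) ∧
    (∀ (a b c : A), a * (b * c) = (a * b) * c) ∧
    (∀ c : A, (1 : A) * c = c) ∧
    (∀ (a b c : A),
      a * (c * sigmaConv k A f.toLinearMap b) =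
        (a * c) * sigmaConv k A f.toLinearMap b) ∧
    (∀ a b : A,
      (sigmaConv k A f.toLinearMap (a * b) - a * b) =
        (sigmaConv k A f.toLinearMap a - a) * sigmaConv k A f.toLinearMap b +
          a * (sigmaConv k A f.toLinearMap b - b)) ∧
    (∀ a : A,
      sigmaConv k A f.toLinearMap a - a =
        (1 : A) * sigmaConv k A f.toLinearMap a - a * (1 : A)) := by
  refine ⟨fun a b c => ?_, fun c => ?_, fun b c c' => ?_, fun a b c => (mul_assoc a b c).symm,
    fun c => one_mul c, fun a b c => (mul_assoc a c _).symm, fun a b => ?_, fun a => ?_⟩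
  · rw [sigmaConv_mul, mul_assoc]
  · rw [sigmaConv_one, mul_one]
  · rw [add_mul]
  · rw [sigmaConv_mul, sub_mul, mul_sub]; abel
  · rw [one_mul, mul_one]
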